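/- arXiv:alg-geom/9708016 — 3 statements merged into one kernel-verified Lean document; each statement's English description precedes it below -/
import Mathlib

section
/- Write τ ∈ ℍ_g in block form ((τ₁, ᵗτ₂),(τ₂, τ₃)) with τ₁ ∈ ℍ_{g-1}, τ₂ ∈ ℂ^{g-1} a row vector, and τ₃ ∈ ℂ. For γ = ((A,B),(C,D)) ∈ Sp(2(g-1),ℤ), the action of the embedded matrix g₁ = ((A,0,B,0),(0,1,0,0),(C,0,D,0),(0,0,0,1)) on τ has lower-right entry equal to τ₃ - τ₂(Cτ₁+D)^{-1} C ᵗτ₂ and lower-left block equal to τ₂(Cτ₁+D)^{-1}. -/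
open Matrix

/-- The Siegel upper half space `ℍ_g`. -/
def SiegelUpperHalfSpace (g : ℕ) : Set (Matrix (Fin g) (Fin g) ℂ) :=
  {τ | τ.IsSymm ∧ (Matrix.of fun i j => (τ i j).im).PosDef}

/-- The action `γ(τ) = (Aτ+B)(Cτ+D)⁻¹`. -/
noncomputable def siegelAct {g : ℕ} (γ : Matrix (Fin g ⊕ Fin g) (Fin g ⊕ Fin g) ℝ)
    (τ : Matrix (Fin g) (Fin g) ℂ) : Matrix (Fin g) (Fin g) ℂ :=
  (γ.toBlocks₁₁.map (Complex.ofReal) * τ + γ.toBlocks₁₂.map (Complex.ofReal)) *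
    (γ.toBlocks₂₁.map (Complex.ofReal) * τ + γ.toBlocks₂₂.map (Complex.ofReal))⁻¹

/-- View an index of `Fin (k+1)` as an index of `Fin k` if possible. -/
def liftIdx {k : ℕ} (i : Fin (k + 1) ⊕ Fin (k + 1)) : Option (Fin k ⊕ Fin k) :=
  Sum.elim
    (fun a : Fin (k + 1) => if h : (a : ℕ) < k then some (Sum.inl ⟨a, h⟩) else none)
    (fun b : Fin (k + 1) => if h : (b : ℕ) < k then some (Sum.inr ⟨b, h⟩) else none) i

/-- The embedding `((A,B),(C,D)) ↦ ((A,0,B,0),(0,1,0,0),(C,0,D,0),(0,0,0,1))` of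
`2k × 2k` matrices into `2(k+1) × 2(k+1)` matrices. -/
def gOne (k : ℕ) (M : Matrix (Fin k ⊕ Fin k) (Fin k ⊕ Fin k) ℤ) :
    Matrix (Fin (k + 1) ⊕ Fin (k + 1)) (Fin (k + 1) ⊕ Fin (k + 1)) ℤ :=
  Matrix.of fun i j =>
    match liftIdx i, liftIdx j with
    | some i', some j' => M i' j'
    | _, _ => if i = j then 1 else 0

/-!
Reindex `Fin (k + 1)` as `Fin k ⊕ Fin 1`. Then the blocks of `g₁` are `diag(A, 1)`, `diag(B, 0)`,
`diag(C, 0)`, `diag(D, 1)`, so the denominator of `g₁(τ)` is block upper triangular with diagonal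
blocks `Cτ₁ + D` and `1`; inverting it gives the last row of `g₁(τ)` explicitly.

The one non-formal input is the invertibility of `Cτ₁ + D`. For a symplectic `((A, B), (C, D))` and
a symmetric `τ`, `(Cτ + D)ᵀ(Aτ̄ + B) - (Aτ + B)ᵀ(Cτ̄ + D) = τ̄ - τ = -2i Im τ`; since `C` and `D`
are real, a kernel vector `x` of `Cτ + D` has `x̄` in the kernel of `Cτ̄ + D`, and pairing the
identity with `x` and `x̄` gives `x̄ᵀ (Im τ) x = 0`, contradicting `Im τ > 0`.
-/

theorem Fin.castAdd_ne_natAdd {k m : ℕ} (a : Fin k) (j : Fin m) :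
    Fin.castAdd m a ≠ Fin.natAdd k j := by
  simp only [ne_eq, Fin.ext_iff, Fin.val_castAdd, Fin.val_natAdd]
  omega

theorem finSumFinEquiv_inr_zero {k : ℕ} :
    (finSumFinEquiv : Fin k ⊕ Fin 1 ≃ Fin (k + 1)) (Sum.inr 0) = Fin.last k :=
  rfl

namespace Matrix

section

variable {l n : Type*} [Fintype l] [DecidableEq l] [Fintype n]

theorem transpose_mul_sub_transpose_mul_of_mem_symplecticGroup {R : Type*} [CommRing R]
    {A B C D τ σ : Matrix l l R} (h : fromBlocks A B C D ∈ symplecticGroup l R)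
    (hτ : τᵀ = τ) :
    (C * τ + D)ᵀ * (A * σ + B) - (A * τ + B)ᵀ * (C * σ + D) = σ - τ := by
  obtain ⟨hAC, hBD, hAD⟩ := SymplecticGroup.fromBlocks_mem_iff.mp h
  have hDA : Dᵀ * A - Bᵀ * C = 1 := by
    simpa [transpose_sub, transpose_mul] using congrArg transpose hAD
  have expand : (C * τ + D)ᵀ * (A * σ + B) - (A * τ + B)ᵀ * (C * σ + D) =
      τ * (Cᵀ * A - Aᵀ * C) * σ - τ * (Aᵀ * D - Cᵀ * B) + (Dᵀ * A - Bᵀ * C) * σ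
        + (Dᵀ * B - Bᵀ * D) := by
    simp only [transpose_add, transpose_mul, hτ]
    noncomm_ring
  rw [expand, hAC, hBD, hAD, hDA]
  noncomm_ring

theorem PosDef.re_dotProduct_map_ofReal_mulVec_pos {Y : Matrix n n ℝ} (hY : Y.PosDef)
    {x : n → ℂ} (hx : x ≠ 0) : 0 < (star x ⬝ᵥ Y.map Complex.ofReal *ᵥ x).re := by
  set u : n → ℝ := fun i => (x i).re
  set v : n → ℝ := fun i => (x i).im
  have hre : (star x ⬝ᵥ Y.map Complex.ofReal *ᵥ x).re = u ⬝ᵥ Y *ᵥ u + v ⬝ᵥ Y *ᵥ v := by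
    simp only [dotProduct, mulVec, map_apply, Pi.star_apply, Finset.mul_sum, Complex.re_sum,
      ← Finset.sum_add_distrib]
    refine Finset.sum_congr rfl fun i _ => Finset.sum_congr rfl fun j _ => ?_
    simp [u, v, Complex.mul_re, Complex.mul_im]
  have quad_pos {w : n → ℝ} (hw : w ≠ 0) : 0 < w ⬝ᵥ Y *ᵥ w := by
    simpa using hY.dotProduct_mulVec_pos hw
  have quad_nonneg (w : n → ℝ) : 0 ≤ w ⬝ᵥ Y *ᵥ w := by
    simpa using hY.posSemidef.dotProduct_mulVec_nonneg w
  rw [hre]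
  by_cases hu : u = 0
  · have hv : v ≠ 0 := fun hv => hx (funext fun i => Complex.ext (congrFun hu i) (congrFun hv i))
    exact add_pos_of_nonneg_of_pos (quad_nonneg u) (quad_pos hv)
  · exact add_pos_of_pos_of_nonneg (quad_pos hu) (quad_nonneg v)

end

theorem fromBlocks_mul_add_mul_inv {m o R : Type*} [Fintype m] [Fintype o] [DecidableEq m]
    [DecidableEq o] [CommRing R] (A B C D τ₁ : Matrix m m R) (x : Matrix m o R)
    (y : Matrix o m R) (t : Matrix o o R) (hE : IsUnit (C * τ₁ + D)) :
    (fromBlocks A 0 0 1 * fromBlocks τ₁ x y t + fromBlocks B 0 0 0) *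
        (fromBlocks C 0 0 0 * fromBlocks τ₁ x y t + fromBlocks D 0 0 1)⁻¹ =
      fromBlocks ((A * τ₁ + B) * (C * τ₁ + D)⁻¹) (A * x - (A * τ₁ + B) * (C * τ₁ + D)⁻¹ * C * x)
        (y * (C * τ₁ + D)⁻¹) (t - y * (C * τ₁ + D)⁻¹ * C * x) := by
  simp only [fromBlocks_multiply, fromBlocks_add, Matrix.zero_mul, Matrix.one_mul, add_zero,
    zero_add]
  rw [inv_fromBlocks_zero₂₁_of_isUnit_iff _ _ _ (iff_of_true hE isUnit_one), fromBlocks_multiply]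
  simp only [inv_one, Matrix.mul_one, Matrix.mul_zero, add_zero, Matrix.mul_neg, Matrix.mul_assoc]
  congr 1 <;> noncomm_ring

section

variable {m n o p α β : Type*} (M : Matrix (m ⊕ n) (o ⊕ p) α) (f : α → β)

@[simp] theorem toBlocks₁₁_map : (M.map f).toBlocks₁₁ = M.toBlocks₁₁.map f := rfl
@[simp] theorem toBlocks₁₂_map : (M.map f).toBlocks₁₂ = M.toBlocks₁₂.map f := rfl
@[simp] theorem toBlocks₂₁_map : (M.map f).toBlocks₂₁ = M.toBlocks₂₁.map f := rfl
@[simp] theorem toBlocks₂₂_map : (M.map f).toBlocks₂₂ = M.toBlocks₂₂.map f := rfl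

end

@[simp] theorem map_intCast_map_ofReal {m n : Type*} (N : Matrix m n ℤ) :
    (N.map ((↑) : ℤ → ℝ)).map Complex.ofReal = N.map ((↑) : ℤ → ℂ) := by
  ext; simp

theorem IsSymm.submatrix_finSumFinEquiv {α : Type*} {k : ℕ}
    {τ : Matrix (Fin (k + 1)) (Fin (k + 1)) α} (hτ : τ.IsSymm) :
    τ.submatrix finSumFinEquiv finSumFinEquiv =
      Matrix.fromBlocks (τ.submatrix Fin.castSucc Fin.castSucc)
        (replicateCol (Fin 1) fun b => τ (Fin.last k) b.castSucc)
        (replicateRow (Fin 1) fun b => τ (Fin.last k) b.castSucc)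
        (of fun _ _ => τ (Fin.last k) (Fin.last k)) := by
  ext (i | i) (j | j) <;> simp [Subsingleton.elim (α := Fin 1) _ 0]
  case inl.inr => exact hτ.apply _ _
  all_goals rfl

end Matrix

theorem SiegelUpperHalfSpace.submatrix {m g : ℕ} {τ : Matrix (Fin g) (Fin g) ℂ}
    (hτ : τ ∈ SiegelUpperHalfSpace g) {e : Fin m → Fin g} (he : Function.Injective e) :
    τ.submatrix e e ∈ SiegelUpperHalfSpace m :=
  ⟨hτ.1.submatrix e, hτ.2.submatrix he⟩

open Complex in
theorem SiegelUpperHalfSpace.isUnit_toBlocks₂₁_mul_add_toBlocks₂₂ {g : ℕ}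
    {γ : Matrix (Fin g ⊕ Fin g) (Fin g ⊕ Fin g) ℝ} (hγ : γ ∈ symplecticGroup (Fin g) ℝ)
    {τ : Matrix (Fin g) (Fin g) ℂ} (hτ : τ ∈ SiegelUpperHalfSpace g) :
    IsUnit (γ.toBlocks₂₁.map ofReal * τ + γ.toBlocks₂₂.map ofReal) := by
  set A := γ.toBlocks₁₁.map ofReal
  set B := γ.toBlocks₁₂.map ofReal
  set C := γ.toBlocks₂₁.map ofReal
  set D := γ.toBlocks₂₂.map ofReal
  set τbar := τ.map (starRingEnd ℂ)
  have hsymp : fromBlocks A B C D ∈ symplecticGroup (Fin g) ℂ := by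
    rw [← fromBlocks_map, fromBlocks_toBlocks]
    exact SymplecticGroup.map_mem hγ ofRealHom
  have hconj : (C * τ + D).map (starRingEnd ℂ) = C * τbar + D := by
    simp [C, D, τbar, Matrix.map_mul, Matrix.map_add, Matrix.map_map, Function.comp_def]
  rw [isUnit_iff_isUnit_det, isUnit_iff_ne_zero]
  intro hdet
  obtain ⟨x, hx, hker⟩ := exists_mulVec_eq_zero_iff.mpr hdet
  have hker_conj : (C * τbar + D) *ᵥ star x = 0 := by
    funext i
    have := RingHom.map_mulVec (starRingEnd ℂ) (C * τ + D) x i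
    rw [hker, hconj] at this
    exact this.symm.trans (map_zero _)
  have hzero : x ⬝ᵥ (τbar - τ) *ᵥ star x = 0 := by
    rw [← transpose_mul_sub_transpose_mul_of_mem_symplecticGroup hsymp hτ.1, sub_mulVec,
      dotProduct_sub, ← mulVec_mulVec, ← mulVec_mulVec, hker_conj, dotProduct_mulVec x,
      vecMul_transpose, hker]
    simp
  have him : τbar - τ = (-2 * I) • (Matrix.of fun i j => (τ i j).im).map ofReal := by
    ext i j
    apply Complex.ext <;> simp [τbar]; ring
  rw [him, smul_mulVec, dotProduct_smul, smul_eq_mul, mul_eq_zero] at hzero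
  have hpos := hτ.2.re_dotProduct_map_ofReal_mulVec_pos (star_ne_zero.mpr hx)
  rw [star_star, hzero.resolve_left (by simp)] at hpos
  simp at hpos

open Complex in
theorem submatrix_siegelAct {g : ℕ} {m : Type*} [Fintype m] [DecidableEq m] (e : m ≃ Fin g)
    (γ : Matrix (Fin g ⊕ Fin g) (Fin g ⊕ Fin g) ℝ) (τ : Matrix (Fin g) (Fin g) ℂ) :
    (siegelAct γ τ).submatrix e e =
      ((γ.toBlocks₁₁.map ofReal).submatrix e e * τ.submatrix e e +
          (γ.toBlocks₁₂.map ofReal).submatrix e e) *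
        ((γ.toBlocks₂₁.map ofReal).submatrix e e * τ.submatrix e e +
          (γ.toBlocks₂₂.map ofReal).submatrix e e)⁻¹ := by
  rw [siegelAct, ← submatrix_mul_equiv _ _ _ e, ← inv_submatrix_equiv]
  simp only [submatrix_add, Pi.add_apply, submatrix_mul_equiv]

section gOne

variable {k : ℕ}

@[simp] theorem liftIdx_inl_castAdd (a : Fin k) :
    liftIdx (Sum.inl (Fin.castAdd 1 a)) = some (Sum.inl a) := by
  simp [liftIdx]

@[simp] theorem liftIdx_inr_castAdd (a : Fin k) :
    liftIdx (Sum.inr (Fin.castAdd 1 a)) = some (Sum.inr a) := by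
  simp [liftIdx]

@[simp] theorem liftIdx_inl_natAdd (j : Fin 1) : liftIdx (Sum.inl (Fin.natAdd k j)) = none := by
  simp [liftIdx]

@[simp] theorem liftIdx_inr_natAdd (j : Fin 1) : liftIdx (Sum.inr (Fin.natAdd k j)) = none := by
  simp [liftIdx]

variable (M : Matrix (Fin k ⊕ Fin k) (Fin k ⊕ Fin k) ℤ)

theorem gOne_toBlocks₁₁_submatrix :
    (gOne k M).toBlocks₁₁.submatrix finSumFinEquiv finSumFinEquiv =
      fromBlocks M.toBlocks₁₁ 0 0 (1 : Matrix (Fin 1) (Fin 1) ℤ) := by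
  ext (i | i) (j | j) <;>
    simp [gOne, toBlocks₁₁, Fin.castAdd_ne_natAdd, (Fin.castAdd_ne_natAdd _ _).symm,
      Subsingleton.elim (α := Fin 1) _ 0]

theorem gOne_toBlocks₁₂_submatrix :
    (gOne k M).toBlocks₁₂.submatrix finSumFinEquiv finSumFinEquiv =
      fromBlocks M.toBlocks₁₂ 0 0 (0 : Matrix (Fin 1) (Fin 1) ℤ) := by
  ext (i | i) (j | j) <;> simp [gOne, toBlocks₁₂]

theorem gOne_toBlocks₂₁_submatrix :
    (gOne k M).toBlocks₂₁.submatrix finSumFinEquiv finSumFinEquiv =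
      fromBlocks M.toBlocks₂₁ 0 0 (0 : Matrix (Fin 1) (Fin 1) ℤ) := by
  ext (i | i) (j | j) <;> simp [gOne, toBlocks₂₁]

theorem gOne_toBlocks₂₂_submatrix :
    (gOne k M).toBlocks₂₂.submatrix finSumFinEquiv finSumFinEquiv =
      fromBlocks M.toBlocks₂₂ 0 0 (1 : Matrix (Fin 1) (Fin 1) ℤ) := by
  ext (i | i) (j | j) <;>
    simp [gOne, toBlocks₂₂, Fin.castAdd_ne_natAdd, (Fin.castAdd_ne_natAdd _ _).symm,
      Subsingleton.elim (α := Fin 1) _ 0]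

end gOne

theorem submatrix_siegelAct_gOne {k : ℕ} (γ : Matrix (Fin k ⊕ Fin k) (Fin k ⊕ Fin k) ℤ)
    {τ : Matrix (Fin (k + 1)) (Fin (k + 1)) ℂ} {τ₁ : Matrix (Fin k) (Fin k) ℂ}
    {x : Matrix (Fin k) (Fin 1) ℂ} {y : Matrix (Fin 1) (Fin k) ℂ} {t : Matrix (Fin 1) (Fin 1) ℂ}
    (hτ : τ.submatrix finSumFinEquiv finSumFinEquiv = fromBlocks τ₁ x y t)
    (hE : IsUnit (γ.toBlocks₂₁.map ((↑) : ℤ → ℂ) * τ₁ + γ.toBlocks₂₂.map ((↑) : ℤ → ℂ))) :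
    let A := γ.toBlocks₁₁.map ((↑) : ℤ → ℂ)
    let B := γ.toBlocks₁₂.map ((↑) : ℤ → ℂ)
    let C := γ.toBlocks₂₁.map ((↑) : ℤ → ℂ)
    let D := γ.toBlocks₂₂.map ((↑) : ℤ → ℂ)
    (siegelAct ((gOne k γ).map ((↑) : ℤ → ℝ)) τ).submatrix finSumFinEquiv finSumFinEquiv =
      fromBlocks ((A * τ₁ + B) * (C * τ₁ + D)⁻¹) (A * x - (A * τ₁ + B) * (C * τ₁ + D)⁻¹ * C * x)
        (y * (C * τ₁ + D)⁻¹) (t - y * (C * τ₁ + D)⁻¹ * C * x) := by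
  intro A B C D
  rw [submatrix_siegelAct, hτ]
  simp only [toBlocks₁₁_map, toBlocks₁₂_map, toBlocks₂₁_map, toBlocks₂₂_map,
    map_intCast_map_ofReal, submatrix_map, gOne_toBlocks₁₁_submatrix, gOne_toBlocks₁₂_submatrix,
    gOne_toBlocks₂₁_submatrix, gOne_toBlocks₂₂_submatrix, fromBlocks_map, Matrix.map_zero,
    Matrix.map_one, Int.cast_zero, Int.cast_one]
  exact fromBlocks_mul_add_mul_inv A B C D τ₁ x y t hE

/-- Writing `τ ∈ ℍ_{k+1}` in block form `((τ₁, ᵗτ₂),(τ₂, τ₃))`, the action of the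
embedded matrix `g₁` of `γ = ((A,B),(C,D)) ∈ Sp(2k,ℤ)` has lower-right entry
`τ₃ - τ₂(Cτ₁+D)⁻¹Cᵗτ₂` and lower-left row `τ₂(Cτ₁+D)⁻¹`. -/
theorem gOne_action_blocks (k : ℕ) (γ : Matrix (Fin k ⊕ Fin k) (Fin k ⊕ Fin k) ℤ)
    (hγ : γ ∈ Matrix.symplecticGroup (Fin k) ℤ)
    (τ : Matrix (Fin (k + 1)) (Fin (k + 1)) ℂ)
    (hτ : τ ∈ SiegelUpperHalfSpace (k + 1)) :
    let τ₁ : Matrix (Fin k) (Fin k) ℂ := τ.submatrix Fin.castSucc Fin.castSucc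
    let τ₂ : Fin k → ℂ := fun b => τ (Fin.last k) (Fin.castSucc b)
    let Cc : Matrix (Fin k) (Fin k) ℂ := γ.toBlocks₂₁.map (fun x : ℤ => (x : ℂ))
    let Dc : Matrix (Fin k) (Fin k) ℂ := γ.toBlocks₂₂.map (fun x : ℤ => (x : ℂ))
    let v : Fin k → ℂ := Matrix.vecMul τ₂ (Cc * τ₁ + Dc)⁻¹
    let στ := siegelAct ((gOne k γ).map (fun x : ℤ => (x : ℝ))) τ
    (στ (Fin.last k) (Fin.last k) =
        τ (Fin.last k) (Fin.last k) - (Matrix.vecMul v Cc) ⬝ᵥ τ₂) ∧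
    (∀ b : Fin k, στ (Fin.last k) (Fin.castSucc b) = v b) := by
  intro τ₁ τ₂ Cc Dc v στ
  have hE : IsUnit (Cc * τ₁ + Dc) := by
    simpa only [toBlocks₂₁_map, toBlocks₂₂_map, Int.coe_castRingHom, map_intCast_map_ofReal]
      using SiegelUpperHalfSpace.isUnit_toBlocks₂₁_mul_add_toBlocks₂₂
        (SymplecticGroup.map_mem hγ (Int.castRingHom ℝ))
        (SiegelUpperHalfSpace.submatrix hτ (Fin.castSucc_injective k))
  have hστ := submatrix_siegelAct_gOne γ hτ.1.submatrix_finSumFinEquiv hE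
  refine ⟨?_, fun b => ?_⟩
  · have h := congrFun₂ hστ (Sum.inr 0) (Sum.inr 0)
    rw [submatrix_apply, finSumFinEquiv_inr_zero, fromBlocks_apply₂₂] at h
    refine h.trans ?_
    rw [Matrix.sub_apply, ← replicateRow_vecMul, ← replicateRow_vecMul,
      replicateRow_mul_replicateCol_apply]
    rfl
  · have h := congrFun₂ hστ (Sum.inr 0) (Sum.inl b)
    rw [submatrix_apply, finSumFinEquiv_inr_zero, fromBlocks_apply₂₁] at h
    refine h.trans ?_
    rw [← replicateRow_vecMul]
    rfl
end

section
/- The six matrices α₁, α₂, α₃, β₁, β₂, β₃ ∈ Sym₃(ℤ), where α_i = E_{ii} and β₁ = ((0,0,0),(0,1,-1),(0,-1,1)), β₂ = ((1,0,-1),(0,0,0),(-1,0,1)), β₃ = ((1,-1,0),(-1,1,0),(0,0,0)), form a basis of the rank-6 lattice Sym₃(ℤ) of symmetric 3×3 integer matrices, and each of them is positive semidefinite. -/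
open Matrix

def alpha1 : Matrix (Fin 3) (Fin 3) ℤ := !![1, 0, 0; 0, 0, 0; 0, 0, 0]
def alpha2 : Matrix (Fin 3) (Fin 3) ℤ := !![0, 0, 0; 0, 1, 0; 0, 0, 0]
def alpha3 : Matrix (Fin 3) (Fin 3) ℤ := !![0, 0, 0; 0, 0, 0; 0, 0, 1]
def beta1 : Matrix (Fin 3) (Fin 3) ℤ := !![0, 0, 0; 0, 1, -1; 0, -1, 1]
def beta2 : Matrix (Fin 3) (Fin 3) ℤ := !![1, 0, -1; 0, 0, 0; -1, 0, 1]
def beta3 : Matrix (Fin 3) (Fin 3) ℤ := !![1, -1, 0; -1, 1, 0; 0, 0, 0]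

/-! The combination `∑ cᵢ gᵢ` of the six generators has off-diagonal entries `-c₅, -c₄, -c₃`
and diagonal entries `c₀ + c₄ + c₅, c₁ + c₃ + c₅, c₂ + c₃ + c₄`, a unimodular triangular change of
coordinates: the off-diagonal entries of a symmetric `A` determine `c₃, c₄, c₅` and then the
diagonal ones determine `c₀, c₁, c₂`. Each generator is a rank-one matrix `v vᵀ` with `v` one of
`e₁, e₂, e₃, e₂ - e₃, e₁ - e₃, e₁ - e₂`, hence positive semidefinite. -/

theorem Matrix.posSemidef_map_intCast_vecMulVec_self {n R : Type*} [Fintype n] [CommRing R]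
    [PartialOrder R] [StarRing R] [StarOrderedRing R] (v : n → ℤ) :
    ((vecMulVec v v).map (Int.cast : ℤ → R)).PosSemidef := by
  have hstar : star (fun i => (v i : R)) = fun i => (v i : R) := by
    funext i
    exact star_intCast (v i)
  have h := posSemidef_vecMulVec_self_star (fun i => (v i : R))
  rw [hstar] at h
  convert h using 1
  ext i j
  simp [vecMulVec_apply]

def voronoiCombination (c : Fin 6 → ℤ) : Matrix (Fin 3) (Fin 3) ℤ :=
  c 0 • alpha1 + c 1 • alpha2 + c 2 • alpha3 + c 3 • beta1 + c 4 • beta2 + c 5 • beta3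

def voronoiCoeffs (A : Matrix (Fin 3) (Fin 3) ℤ) : Fin 6 → ℤ :=
  ![A 0 0 + A 0 1 + A 0 2, A 1 1 + A 0 1 + A 1 2, A 2 2 + A 0 2 + A 1 2, -A 1 2, -A 0 2, -A 0 1]

theorem voronoiCombination_eq (c : Fin 6 → ℤ) :
    voronoiCombination c =
      !![c 0 + c 4 + c 5, -c 5, -c 4;
         -c 5, c 1 + c 3 + c 5, -c 3;
         -c 4, -c 3, c 2 + c 3 + c 4] := by
  ext i j
  fin_cases i <;> fin_cases j <;>
    simp [voronoiCombination, alpha1, alpha2, alpha3, beta1, beta2, beta3]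

theorem voronoiCoeffs_voronoiCombination (c : Fin 6 → ℤ) :
    voronoiCoeffs (voronoiCombination c) = c := by
  rw [voronoiCombination_eq]
  funext i
  fin_cases i <;> simp [voronoiCoeffs]

theorem voronoiCombination_voronoiCoeffs {A : Matrix (Fin 3) (Fin 3) ℤ} (hA : A.IsSymm) :
    voronoiCombination (voronoiCoeffs A) = A := by
  rw [voronoiCombination_eq]
  ext i j
  fin_cases i <;> fin_cases j <;> simp [voronoiCoeffs] <;> exact hA.apply _ _

/-- `α₁, α₂, α₃, β₁, β₂, β₃` form a `ℤ`-basis of the rank-6 lattice `Sym₃(ℤ)` of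
symmetric integer `3×3` matrices, and each of them is positive semidefinite. -/
theorem voronoi_generators_genus_three :
    (∀ A : Matrix (Fin 3) (Fin 3) ℤ, A.IsSymm →
      ∃! c : Fin 6 → ℤ, A = c 0 • alpha1 + c 1 • alpha2 + c 2 • alpha3 +
        c 3 • beta1 + c 4 • beta2 + c 5 • beta3) ∧
    ((alpha1.map (Int.cast : ℤ → ℝ)).PosSemidef ∧
      (alpha2.map (Int.cast : ℤ → ℝ)).PosSemidef ∧
      (alpha3.map (Int.cast : ℤ → ℝ)).PosSemidef ∧
      (beta1.map (Int.cast : ℤ → ℝ)).PosSemidef ∧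
      (beta2.map (Int.cast : ℤ → ℝ)).PosSemidef ∧
      (beta3.map (Int.cast : ℤ → ℝ)).PosSemidef) := by
  refine ⟨fun A hA => ⟨voronoiCoeffs A, (voronoiCombination_voronoiCoeffs hA).symm, ?_⟩, ?_⟩
  · intro c hc
    change A = voronoiCombination c at hc
    rw [hc, voronoiCoeffs_voronoiCombination]
  · have rankOne : ∀ (M : Matrix (Fin 3) (Fin 3) ℤ) (v : Fin 3 → ℤ), M = vecMulVec v v →
        (M.map (Int.cast : ℤ → ℝ)).PosSemidef :=
      fun M v hM => hM ▸ posSemidef_map_intCast_vecMulVec_self v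
    exact ⟨rankOne _ ![1, 0, 0] (by decide), rankOne _ ![0, 1, 0] (by decide),
      rankOne _ ![0, 0, 1] (by decide), rankOne _ ![0, 1, -1] (by decide),
      rankOne _ ![1, 0, -1] (by decide), rankOne _ ![1, -1, 0] (by decide)⟩
end

section
/- Fix g ≥ 1 and m = (m', m'') ∈ ℝ^g × ℝ^g. For τ ∈ ℍ_g and z ∈ ℂ^g, the theta series Θ_{m'm''}(τ,z) = Σ_{q∈ℤ^g} exp(2πi[(q+m')τᵗ(q+m')/2 + (q+m')ᵗ(z+m'')]) converges absolutely. -/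
open Matrix Complex

/-- The term of the theta series `Θ_{m'm''}(τ,z)` indexed by `q ∈ ℤ^g`:
`exp(2πi[(q+m')τᵗ(q+m')/2 + (q+m')ᵗ(z+m'')])`, with row-vector conventions. -/
noncomputable def thetaTerm (g : ℕ) (m' m'' : Fin g → ℝ)
    (τ : Matrix (Fin g) (Fin g) ℂ) (z : Fin g → ℂ) (q : Fin g → ℤ) : ℂ :=
  let v : Fin g → ℂ := fun i => ((q i : ℝ) + m' i : ℝ)
  Complex.exp (2 * Real.pi * Complex.I *
    ((Matrix.vecMul v τ) ⬝ᵥ v / 2 + v ⬝ᵥ (z + fun i => (m'' i : ℂ))))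

/-! With `v = q + m'` and `Y = Im τ`, the term has absolute value `exp(-π (v Y ᵗv + 2 v ᵗIm z))`.
Since `Y` is positive definite, `v Y ᵗv ≥ c |v|²` for some `c > 0` (minimum of the form on the unit
sphere), so the term is dominated by `∏ᵢ exp(-π (c vᵢ² - 2 |Im zᵢ| |vᵢ|))`, a product of
one-variable Gaussian-type terms, each summable over `ℤ`. -/

open Real

theorem exists_pos_mul_norm_sq_le {E : Type*} [NormedAddCommGroup E] [NormedSpace ℝ E]
    [FiniteDimensional ℝ E] {Q : E → ℝ} (hQ : Continuous Q)
    (hQ_smul : ∀ (t : ℝ) x, Q (t • x) = t ^ 2 * Q x) (hQ_pos : ∀ x ≠ 0, 0 < Q x) :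
    ∃ c > 0, ∀ x, c * ‖x‖ ^ 2 ≤ Q x := by
  have hQ_zero : Q 0 = 0 := by simpa using hQ_smul 0 0
  cases subsingleton_or_nontrivial E with
  | inl _ => exact ⟨1, one_pos, fun x => by simp [Subsingleton.elim x 0, hQ_zero]⟩
  | inr _ =>
    obtain ⟨u, hu, hmin⟩ := (isCompact_sphere (0 : E) 1).exists_isMinOn
      (NormedSpace.sphere_nonempty.mpr zero_le_one) hQ.continuousOn
    have hu0 : u ≠ 0 := ne_zero_of_mem_unit_sphere ⟨u, hu⟩
    refine ⟨Q u, hQ_pos u hu0, fun x => ?_⟩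
    rcases eq_or_ne x 0 with rfl | hx
    · simp [hQ_zero]
    have hx' : ‖x‖⁻¹ • x ∈ Metric.sphere (0 : E) 1 := by
      simp [norm_smul, hx]
    calc Q u * ‖x‖ ^ 2 ≤ Q (‖x‖⁻¹ • x) * ‖x‖ ^ 2 := by gcongr; exact hmin hx'
      _ = Q x := by rw [hQ_smul]; field_simp

theorem Matrix.PosDef.exists_pos_mul_sum_sq_le {n : Type*} [Fintype n] {Y : Matrix n n ℝ}
    (hY : Y.PosDef) : ∃ c > 0, ∀ v : n → ℝ, c * ∑ i, v i ^ 2 ≤ v ⬝ᵥ Y *ᵥ v := by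
  obtain ⟨c, hc, hle⟩ := exists_pos_mul_norm_sq_le
    (Q := fun u : EuclideanSpace ℝ n => u.ofLp ⬝ᵥ Y *ᵥ u.ofLp) (by fun_prop)
    (fun t u => by simp [mulVec_smul]; ring)
    (fun u hu => hY.dotProduct_mulVec_pos (by simpa using hu))
  refine ⟨c, hc, fun v => ?_⟩
  simpa [EuclideanSpace.real_norm_sq_eq] using hle (WithLp.toLp 2 v)

theorem summable_shifted_jacobiTheta₂_term_bound {T S : ℝ} (hT : 0 < T) (hS : 0 ≤ S) (r : ℝ) :
    Summable fun n : ℤ => rexp (-π * (T * (n + r) ^ 2 - 2 * S * |n + r|)) := by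
  have hbound := (summable_pow_mul_jacobiTheta₂_term_bound S (half_pos hT) 0).mul_left
    (rexp (π * (T * r ^ 2 + 2 * S * |r|)))
  refine hbound.of_nonneg_of_le (fun _ => (exp_pos _).le) fun n => ?_
  have hsq : (n : ℝ) ^ 2 ≤ 2 * (n + r) ^ 2 + 2 * r ^ 2 := by nlinarith [sq_nonneg ((n : ℝ) + 2 * r)]
  have habs : |(n : ℝ) + r| ≤ |(n : ℝ)| + |r| := abs_add_le _ _
  have h : T / 2 * n ^ 2 - 2 * S * |(n : ℝ)| - (T * r ^ 2 + 2 * S * |r|) ≤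
      T * (n + r) ^ 2 - 2 * S * |n + r| := by
    nlinarith [mul_le_mul_of_nonneg_left hsq hT.le, mul_le_mul_of_nonneg_left habs hS]
  rw [pow_zero, one_mul, Int.cast_abs, ← Real.exp_add, exp_le_exp]
  nlinarith [mul_le_mul_of_nonneg_left h pi_pos.le]

theorem summable_fin_prod_of_nonneg {α : Type*} {n : ℕ} {f : Fin n → α → ℝ}
    (hf : ∀ i a, 0 ≤ f i a) (hsum : ∀ i, Summable (f i)) :
    Summable fun x : Fin n → α => ∏ i, f i (x i) := by
  induction n with
  | zero => exact .of_finite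
  | succ n ih =>
    have hprod : Summable fun p : α × (Fin n → α) => f 0 p.1 * ∏ i, f i.succ (p.2 i) := by
      apply Summable.mul_of_nonneg (hsum 0) (ih (fun i => hf i.succ) fun i => hsum i.succ)
      · exact fun a => hf 0 a
      · exact fun x => Finset.prod_nonneg fun i _ => hf i.succ (x i)
    rw [← (Fin.consEquiv fun _ => α).summable_iff]
    refine hprod.congr fun p => ?_
    simp [Fin.consEquiv, Fin.prod_univ_succ]

theorem Complex.im_ofReal_dotProduct {n : Type*} [Fintype n] (v : n → ℝ) (w : n → ℂ) :
    ((fun i => (v i : ℂ)) ⬝ᵥ w).im = v ⬝ᵥ fun i => (w i).im := by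
  simp [dotProduct, im_sum]

theorem Complex.im_vecMul_ofReal_dotProduct {n : Type*} [Fintype n] (τ : Matrix n n ℂ)
    (v : n → ℝ) :
    ((fun i => (v i : ℂ)) ᵥ* τ ⬝ᵥ fun i => (v i : ℂ)).im =
      v ⬝ᵥ (Matrix.of fun i j => (τ i j).im) *ᵥ v := by
  rw [← dotProduct_mulVec, im_ofReal_dotProduct]
  congr 1
  ext i
  rw [mulVec, dotProduct_comm, im_ofReal_dotProduct, mulVec, dotProduct_comm]
  rfl

theorem norm_thetaTerm (g : ℕ) (m' m'' : Fin g → ℝ) (τ : Matrix (Fin g) (Fin g) ℂ)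
    (z : Fin g → ℂ) (q : Fin g → ℤ) :
    let a : Fin g → ℝ := fun i => q i + m' i
    ‖thetaTerm g m' m'' τ z q‖ = rexp (-π * (a ⬝ᵥ (Matrix.of fun i j => (τ i j).im) *ᵥ a
      + 2 * a ⬝ᵥ fun i => (z i).im)) := by
  intro a
  have hre : ∀ A B : ℂ, (2 * π * I * (A / 2 + B)).re = -π * (A.im + 2 * B.im) := by
    intro A B
    simp only [mul_re, mul_im, add_re, add_im, div_ofNat_re, div_ofNat_im, re_ofNat, im_ofNat,
      ofReal_re, ofReal_im, I_re, I_im]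
    ring
  dsimp only [thetaTerm]
  rw [Complex.norm_exp, hre, im_vecMul_ofReal_dotProduct, im_ofReal_dotProduct]
  simp [a]

/-- For `τ ∈ ℍ_g` the theta series `Θ_{m'm''}(τ,z)` converges absolutely. -/
theorem theta_series_converges_absolutely (g : ℕ) (m' m'' : Fin g → ℝ)
    (τ : Matrix (Fin g) (Fin g) ℂ) (hτ : τ ∈ SiegelUpperHalfSpace g)
    (z : Fin g → ℂ) :
    Summable (fun q : Fin g → ℤ => ‖thetaTerm g m' m'' τ z q‖) := by
  obtain ⟨c, hc, hY⟩ := hτ.2.exists_pos_mul_sum_sq_le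
  set y : Fin g → ℝ := fun i => (z i).im
  refine Summable.of_nonneg_of_le (fun _ => norm_nonneg _) (fun q => ?_)
    (summable_fin_prod_of_nonneg (fun _ _ => (exp_pos _).le)
      fun i => summable_shifted_jacobiTheta₂_term_bound hc (abs_nonneg (y i)) (m' i))
  set a : Fin g → ℝ := fun i => q i + m' i
  have hlin : -(a ⬝ᵥ y) ≤ ∑ i, |y i| * |a i| := by
    rw [dotProduct, ← Finset.sum_neg_distrib]
    exact Finset.sum_le_sum fun i _ => by rw [mul_comm, ← abs_mul]; exact neg_le_abs _
  have hsum : ∑ i, -π * (c * a i ^ 2 - 2 * |y i| * |a i|) =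
      -π * (c * ∑ i, a i ^ 2 - 2 * ∑ i, |y i| * |a i|) := by
    simp only [Finset.mul_sum, ← Finset.sum_sub_distrib]
    exact Finset.sum_congr rfl fun i _ => by ring
  rw [norm_thetaTerm, ← Real.exp_sum, exp_le_exp, hsum]
  linarith [mul_le_mul_of_nonneg_left (hY a) pi_pos.le, mul_le_mul_of_nonneg_left hlin pi_pos.le]
end
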